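/- arXiv:2101.02600 — 5 statements merged into one kernel-verified Lean document; each statement's English description precedes it below -/
import Mathlib

section
/- (Pushing off-diagonal maximal steps preserves dinv and touch and decreases area by one per step.) Let P = (π, w, dv) ∈ LD(n)^{•k} with n ≥ 1, let M = max(w), let m = #{i : w_i = M}, and suppose that a_i(π) > 0 for every index i with w_i = M (no maximal label is on the main diagonal). Let P' = (π', w', dv) be obtained from P by, for each index i with w_i = M, interchanging the i-th north step of π with the east step immediately following it and replacing the label w_i = M by 0 (keeping all decorations). Then P' is a well-defined element of LD(m, n−m)^{•k}; in particular every j ∈ dv is still a contractible valley of (π', w'). Moreover area(P') = area(P) − m, dinv(P') = dinv(P), and touch(P') = touch(P). -/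
open Finset
open scoped Classical

/-- The predecessor of an index (truncated subtraction at `0`). -/
def fpred {N : ℕ} (j : Fin N) : Fin N :=
  ⟨(j : ℕ) - 1, lt_of_le_of_lt (Nat.sub_le _ _) j.isLt⟩

/-- `j` is a contractible valley of the path with area word `a` and labelling `w`. -/
def IsValley {N : ℕ} (a w : Fin N → ℕ) (j : Fin N) : Prop :=
  0 < (j : ℕ) ∧
    (a j < a (fpred j) ∨ (a j = a (fpred j) ∧ w (fpred j) < w j))

/-- A decorated partially labelled Dyck path of size `N`, encoded by its area word `a`
(`a i` is the diagonal `y = x + a i` on which the `i`-th north step starts), its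
labelling `w`, and its set `dv` of decorated contractible valleys. -/
structure DecPath (N : ℕ) where
  a : Fin N → ℕ
  w : Fin N → ℕ
  dv : Finset (Fin N)
  a_first : ∀ i : Fin N, (i : ℕ) = 0 → a i = 0
  a_step : ∀ j : Fin N, 0 < (j : ℕ) → a j ≤ a (fpred j) + 1
  w_incr : ∀ j : Fin N, 0 < (j : ℕ) → a (fpred j) < a j → w (fpred j) < w j
  w_first : ∀ i : Fin N, (i : ℕ) = 0 → 0 < w i
  dv_valley : ∀ j ∈ dv, IsValley a w j

namespace DecPath

variable {N : ℕ} (P : DecPath N)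

/-- The area statistic. -/
def area : ℕ := ∑ i, P.a i

/-- `(i, j)` is a diagonal inversion (primary or secondary). -/
def Inv (i j : Fin N) : Prop :=
  i < j ∧ ((P.a i = P.a j ∧ P.w i < P.w j) ∨ (P.a i = P.a j + 1 ∧ P.w j < P.w i))

/-- The diagonal inversions whose first coordinate is not decorated. -/
noncomputable def ndinvPairs : Finset (Fin N × Fin N) :=
  Finset.univ.filter fun p => P.Inv p.1 p.2 ∧ p.1 ∉ P.dv

/-- The dinv statistic (as an integer). -/
noncomputable def dinv : ℤ := (P.ndinvPairs.card : ℤ) - (P.dv.card : ℤ)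

/-- The touch statistic. -/
noncomputable def touch : ℕ :=
  (Finset.univ.filter fun i => i ∉ P.dv ∧ P.a i = 0 ∧ 0 < P.w i).card

/-- The number of labels equal to `0`. -/
noncomputable def zeros : ℕ := (Finset.univ.filter fun i => P.w i = 0).card

/-- The maximum label. -/
def wmax : ℕ := Finset.univ.sup P.w

/-- The number of maximal labels. -/
noncomputable def maxCount : ℕ := (Finset.univ.filter fun i => P.w i = P.wmax).card

/-- The exponent vector of the monomial `x^P` (labels equal to `0` are discarded). -/
noncomputable def xexp : ℕ →₀ ℕ :=
  ∑ i, if P.w i ≠ 0 then Finsupp.single (P.w i) 1 else 0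

/-- The exponent vector of `x^P` after setting `x_M = 1` (labels equal to `0` or to `M`
are discarded). -/
noncomputable def xexpM (M : ℕ) : ℕ →₀ ℕ :=
  ∑ i, if P.w i ≠ 0 ∧ P.w i ≠ M then Finsupp.single (P.w i) 1 else 0

/-- The exponent vector of `x^P` after setting `x_{max(w)} = 1`. -/
noncomputable def xexpMax : ℕ →₀ ℕ := P.xexpM P.wmax

end DecPath

/-- The coefficient ring `ℤ[q,t]`. -/
abbrev Rqt : Type := MvPolynomial (Fin 2) ℤ

/-- The variable `q`. -/
noncomputable def q : Rqt := MvPolynomial.X 0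

/-- The variable `t`. -/
noncomputable def t : Rqt := MvPolynomial.X 1

/-- The Gaussian binomial coefficient `[n choose k]_q`, defined by the `q`-Pascal rule. -/
noncomputable def qbinom : ℕ → ℕ → Rqt
  | _, 0 => 1
  | 0, _ + 1 => 0
  | n + 1, k + 1 => qbinom n k + q ^ (k + 1) * qbinom n (k + 1)

/-!
Lowering a step labelled by the maximum `M` by one diagonal keeps the area word valid because
such a step is never followed by a higher one. Relabelling it by `0` turns each secondary
inversion `a i = a j + 1, w j < M` with `w i = M` into the primary inversion `a i - 1 = a j,
0 < w j`, and symmetrically each primary inversion `w i < M = w j` into a secondary one, so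
the set of diagonal inversions is unchanged. Pushed steps were off the diagonal and get label
`0`, so they neither touched before nor touch afterwards.
-/

namespace DecPath

variable {N : ℕ}

theorem dinv_eq_of_inv_iff (Q P : DecPath N) (hInv : ∀ i j, Q.Inv i j ↔ P.Inv i j)
    (hdv : Q.dv = P.dv) : Q.dinv = P.dinv := by
  simp only [dinv, ndinvPairs, hInv, hdv]

variable (P : DecPath N) {M : ℕ}

/-- A north step labelled by a maximal label is followed by an east step. -/
theorem a_le_a_fpred_of_w_fpred_eq (hle : ∀ i, P.w i ≤ M) {j : Fin N} (hj : 0 < (j : ℕ))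
    (hM : P.w (fpred j) = M) : P.a j ≤ P.a (fpred j) := by
  by_contra! hlt
  have := P.w_incr j hj hlt
  have := hle j
  omega

structure Pushable (M : ℕ) : Prop where
  w_pos : ∀ i, 0 < P.w i
  w_le : ∀ i, P.w i ≤ M
  a_pos : ∀ i, P.w i = M → 0 < P.a i

variable (M) in
def pushA : Fin N → ℕ := fun i => if P.w i = M then P.a i - 1 else P.a i

variable (M) in
def pushW : Fin N → ℕ := fun i => if P.w i = M then 0 else P.w i

variable {P}

theorem Pushable.w_ne_of_val_eq_zero (h : P.Pushable M) {i : Fin N} (hi : (i : ℕ) = 0) :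
    P.w i ≠ M := fun hM => by
  have := h.a_pos i hM
  have := P.a_first i hi
  omega

theorem Pushable.pushA_first (h : P.Pushable M) (i : Fin N) (hi : (i : ℕ) = 0) :
    P.pushA M i = 0 := by
  simp only [pushA, if_neg (h.w_ne_of_val_eq_zero hi), P.a_first i hi]

theorem Pushable.pushA_step (h : P.Pushable M) (j : Fin N) (hj : 0 < (j : ℕ)) :
    P.pushA M j ≤ P.pushA M (fpred j) + 1 := by
  have := P.a_step j hj
  unfold pushA
  split_ifs with hjM hpM hpM
  · omega
  · omega
  · have := P.a_le_a_fpred_of_w_fpred_eq h.w_le hj hpM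
    omega
  · omega

theorem Pushable.pushW_incr (h : P.Pushable M) (j : Fin N) (hj : 0 < (j : ℕ))
    (hlt : P.pushA M (fpred j) < P.pushA M j) : P.pushW M (fpred j) < P.pushW M j := by
  have := P.a_step j hj
  unfold pushA at hlt
  unfold pushW
  split_ifs at hlt ⊢ with hpM hjM hjM
  · have := P.a_le_a_fpred_of_w_fpred_eq h.w_le hj hpM
    omega
  · exact h.w_pos j
  · have := h.a_pos j hjM
    omega
  · exact P.w_incr j hj hlt

theorem Pushable.pushW_first (h : P.Pushable M) (i : Fin N) (hi : (i : ℕ) = 0) :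
    0 < P.pushW M i := by
  simp only [pushW, if_neg (h.w_ne_of_val_eq_zero hi), P.w_first i hi]

theorem Pushable.isValley_push (h : P.Pushable M) (j : Fin N) (hj : IsValley P.a P.w j) :
    IsValley (P.pushA M) (P.pushW M) j := by
  obtain ⟨hj0, hval⟩ := hj
  refine ⟨hj0, ?_⟩
  have := h.w_le j
  unfold pushA pushW
  split_ifs with hjM hpM hpM
  · have := h.a_pos j hjM
    have := h.a_pos (fpred j) hpM
    omega
  · have := h.a_pos j hjM
    have := h.w_le (fpred j)
    omega
  -- the valley stays contractible: either strictly below, or on the same diagonal after a `0`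
  · have := h.a_pos (fpred j) hpM
    have := h.w_pos j
    omega
  · exact hval

/-- Interchange every north step labelled `M` with the east step following it, and relabel
it by `0`. -/
@[simps]
def push (h : P.Pushable M) : DecPath N where
  a := P.pushA M
  w := P.pushW M
  dv := P.dv
  a_first := h.pushA_first
  a_step := h.pushA_step
  w_incr := h.pushW_incr
  w_first := h.pushW_first
  dv_valley j hj := h.isValley_push j (P.dv_valley j hj)

variable (h : P.Pushable M)

theorem zeros_push : (P.push h).zeros = (univ.filter fun i => P.w i = M).card := by
  unfold zeros
  simp only [push_w, pushW]
  congr 1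
  refine filter_congr fun i _ => ?_
  by_cases hM : P.w i = M
  · simp [hM]
  · simp [hM, (h.w_pos i).ne']

theorem area_push :
    ((P.push h).area : ℤ) = P.area - (univ.filter fun i => P.w i = M).card := by
  have hcast : ∀ i, ((P.pushA M i : ℕ) : ℤ) = P.a i - if P.w i = M then 1 else 0 := by
    intro i
    unfold pushA
    split_ifs with hM
    · have := h.a_pos i hM
      omega
    · omega
  simp only [area, push_a, Nat.cast_sum, hcast, sum_sub_distrib, sum_boole]

theorem inv_push_iff (i j : Fin N) : (P.push h).Inv i j ↔ P.Inv i j := by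
  have := h.w_pos i
  have := h.w_pos j
  have := h.w_le i
  have := h.w_le j
  simp only [Inv, push_a, push_w, pushA, pushW]
  split_ifs with hiM hjM hjM
  · have := h.a_pos i hiM
    have := h.a_pos j hjM
    omega
  · have := h.a_pos i hiM
    omega
  · have := h.a_pos j hjM
    omega
  · rfl

theorem dinv_push : (P.push h).dinv = P.dinv :=
  dinv_eq_of_inv_iff _ _ (inv_push_iff h) rfl

theorem touch_push : (P.push h).touch = P.touch := by
  unfold touch
  simp only [push_a, push_w, push_dv, pushA, pushW]
  congr 1
  refine filter_congr fun i _ => ?_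
  split_ifs with hM
  · have := h.a_pos i hM
    omega
  · rfl

end DecPath

theorem pushing_off_diagonal_maximal_steps_general
    (n k m : ℕ) (P : DecPath n)
    (hzeros : P.zeros = 0) (hdv : P.dv.card = k) (hm : P.maxCount = m)
    (hoff : ∀ i : Fin n, P.w i = P.wmax → 0 < P.a i) :
    ∃ P' : DecPath n,
      P'.a = (fun i => if P.w i = P.wmax then P.a i - 1 else P.a i) ∧
      P'.w = (fun i => if P.w i = P.wmax then 0 else P.w i) ∧
      P'.dv = P.dv ∧
      P'.zeros = m ∧
      P'.dv.card = k ∧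
      (P'.area : ℤ) = (P.area : ℤ) - (m : ℤ) ∧
      P'.dinv = P.dinv ∧
      P'.touch = P.touch := by
  have w_pos (i : Fin n) : 0 < P.w i := by
    rw [DecPath.zeros, card_eq_zero, filter_eq_empty_iff] at hzeros
    exact Nat.pos_of_ne_zero (hzeros (mem_univ i))
  have h : P.Pushable P.wmax := ⟨w_pos, fun i => le_sup (mem_univ i), hoff⟩
  refine ⟨P.push h, rfl, rfl, rfl, ?_, hdv, ?_, DecPath.dinv_push h, DecPath.touch_push h⟩
  · rw [DecPath.zeros_push, ← hm, DecPath.maxCount]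
  · rw [DecPath.area_push, ← hm, DecPath.maxCount]

/-- (Pushing off-diagonal maximal steps.) Let `P ∈ LD(n)^{•k}` (no zero
labels, `k` decorations) with `n ≥ 1`, `M = max(w)`, `m` maximal labels, and suppose no
maximal label sits on the main diagonal. Interchanging each maximal north step with the
east step following it and relabelling it by `0` yields a well-defined element
`P' ∈ LD(m, n-m)^{•k}` (same decorations, still contractible valleys), with
`area P' = area P - m`, `dinv P' = dinv P` and `touch P' = touch P`. -/
theorem pushing_off_diagonal_maximal_steps
    (n k m : ℕ) (hn : 1 ≤ n) (P : DecPath n)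
    (hzeros : P.zeros = 0) (hdv : P.dv.card = k) (hm : P.maxCount = m)
    (hoff : ∀ i : Fin n, P.w i = P.wmax → 0 < P.a i) :
    ∃ P' : DecPath n,
      P'.a = (fun i => if P.w i = P.wmax then P.a i - 1 else P.a i) ∧
      P'.w = (fun i => if P.w i = P.wmax then 0 else P.w i) ∧
      P'.dv = P.dv ∧
      P'.zeros = m ∧
      P'.dv.card = k ∧
      (P'.area : ℤ) = (P.area : ℤ) - (m : ℤ) ∧
      P'.dinv = P.dinv ∧
      P'.touch = P.touch :=
  pushing_off_diagonal_maximal_steps_general n k m P hzeros hdv hm hoff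
end

section
/- (Deleting a non-decorated maximal diagonal step.) Let P = (π, w, dv) ∈ LD(n)^{•k} with n ≥ 1, M = max(w), and let i be an index with i ∉ dv, a_i(π) = 0 and w_i = M. Let P' = (π', w', dv') be obtained from P by deleting the i-th north step of π together with the east step immediately following it, deleting the i-th entry of w, and reindexing dv accordingly (dv is unchanged as a set of steps). Then P' is a well-defined element of LD(n−1)^{•k}; in particular every decorated step is still a contractible valley of (π', w'). Moreover area(P') = area(P), touch(P') = touch(P) − 1, and dinv(P') = dinv(P) − #{j < i : j ∉ dv, a_j(π) = 0, w_j < M}. -/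
open Finset
open scoped Classical

/-!
Since `w i = M` is maximal, the path cannot rise right after the diagonal step `i` (a rise
needs a strictly larger label), so step `i + 1`, if any, lies on the diagonal again and is not
a contractible valley. Deleting step `i` therefore leaves a Dyck path in which every other step
keeps its diagonal and its relation to its predecessor, so all decorated valleys survive, the
area is unchanged and exactly one touch point is lost. Step `i` is the first index of no
diagonal inversion, and it is the second index exactly of the pairs `(j, i)` with `j < i` on
the diagonal and `w j < M`.
-/

namespace Fin

lemma val_succAbove_eq_ite {n : ℕ} (i : Fin (n + 1)) (j : Fin n) :
    (i.succAbove j : ℕ) = if (j : ℕ) < i then (j : ℕ) else (j : ℕ) + 1 := by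
  unfold succAbove
  split_ifs <;> simp_all [lt_def]

lemma val_succAbove_cases {n : ℕ} (i : Fin (n + 1)) (j : Fin n) :
    (i.succAbove j : ℕ) = i + 1 ∨ ((i.succAbove j : ℕ) = 0 ∧ (j : ℕ) = 0) ∨
      (0 < (j : ℕ) ∧ 0 < (i.succAbove j : ℕ) ∧ fpred (i.succAbove j) = i.succAbove (fpred j)) := by
  have hfpred : ((fpred j : Fin n) : ℕ) = j - 1 := rfl
  have hfpred' : (fpred (i.succAbove j) : ℕ) = (i.succAbove j : ℕ) - 1 := rfl
  have hj := val_succAbove_eq_ite i j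
  have hj' := val_succAbove_eq_ite i (fpred j)
  rw [hfpred] at hj'
  rw [Fin.ext_iff, hfpred']
  split_ifs at hj hj' <;> omega

lemma card_filter_univ_succAbove {n : ℕ} (p : Fin (n + 1) → Prop) [DecidablePred p]
    (i : Fin (n + 1)) :
    #{x | p x} = (if p i then 1 else 0) + #{x : Fin n | p (i.succAbove x)} := by
  simp only [card_filter]
  exact sum_univ_succAbove _ i

lemma card_filter_univ_prod_succAbove {n : ℕ} (r : Fin (n + 1) → Fin (n + 1) → Prop)
    [∀ x y, Decidable (r x y)] (i : Fin (n + 1)) (hr : ∀ y, ¬ r i y) :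
    #{q : Fin (n + 1) × Fin (n + 1) | r q.1 q.2} =
      #{x : Fin n | r (i.succAbove x) i} +
        #{q : Fin n × Fin n | r (i.succAbove q.1) (i.succAbove q.2)} := by
  simp only [card_filter, Fintype.sum_prod_type]
  rw [sum_univ_succAbove _ i]
  simp only [hr, if_false, sum_const_zero, zero_add, sum_univ_succAbove _ i, sum_add_distrib]

end Fin

namespace DecPath

variable {n : ℕ}

lemma w_le_wmax (P : DecPath n) (j : Fin n) : P.w j ≤ P.wmax :=
  le_sup (mem_univ j)

lemma zeros_eq_zero_iff (P : DecPath n) : P.zeros = 0 ↔ ∀ j, 0 < P.w j := by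
  simp [zeros, Nat.pos_iff_ne_zero]

section MaximalDiagonalStep

variable (P : DecPath (n + 1)) {i : Fin (n + 1)}

lemma a_eq_zero_of_val_eq_succ (hai : P.a i = 0) (hwi : P.w i = P.wmax) {z : Fin (n + 1)}
    (hz : (z : ℕ) = i + 1) : P.a z = 0 := by
  have hpred : fpred z = i := Fin.ext (by simp [fpred, hz])
  have hstep := P.a_step z (by omega)
  by_contra hne
  have hrise := P.w_incr z (by omega) (by rw [hpred, hai]; omega)
  rw [hpred, hwi] at hrise
  exact absurd (P.w_le_wmax z) (by omega)

lemma not_isValley_of_val_eq_succ (hai : P.a i = 0) (hwi : P.w i = P.wmax) {z : Fin (n + 1)}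
    (hz : (z : ℕ) = i + 1) : ¬ IsValley P.a P.w z := by
  have hpred : fpred z = i := Fin.ext (by simp [fpred, hz])
  rintro ⟨-, hdrop | ⟨-, hlabel⟩⟩
  · rw [hpred, hai] at hdrop
    omega
  · rw [hpred, hwi] at hlabel
    exact absurd (P.w_le_wmax z) (by omega)

lemma not_inv_left (hai : P.a i = 0) (hwi : P.w i = P.wmax) (j : Fin (n + 1)) : ¬ P.Inv i j := by
  rintro ⟨-, ⟨-, hlabel⟩ | ⟨hdiag, -⟩⟩
  · rw [hwi] at hlabel
    exact absurd (P.w_le_wmax j) (by omega)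
  · omega

lemma inv_right_iff (hai : P.a i = 0) (hwi : P.w i = P.wmax) (j : Fin (n + 1)) :
    P.Inv j i ↔ j < i ∧ P.a j = 0 ∧ P.w j < P.wmax := by
  have := P.w_le_wmax j
  simp only [Inv, hai, hwi]
  omega

def deleteStep (hai : P.a i = 0) (hwi : P.w i = P.wmax) (hpos : ∀ j, 0 < P.w j) :
    DecPath n where
  a := P.a ∘ i.succAbove
  w := P.w ∘ i.succAbove
  dv := univ.filter fun j => i.succAbove j ∈ P.dv
  a_first j hj := by
    rcases Fin.val_succAbove_cases i j with hsucc | ⟨hzero, -⟩ | ⟨hj', -⟩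
    · exact P.a_eq_zero_of_val_eq_succ hai hwi hsucc
    · exact P.a_first _ hzero
    · omega
  a_step j hj := by
    rcases Fin.val_succAbove_cases i j with hsucc | ⟨-, hj'⟩ | ⟨-, hpos', hcomm⟩
    · simp [P.a_eq_zero_of_val_eq_succ hai hwi hsucc]
    · omega
    · simpa only [Function.comp_apply, hcomm] using P.a_step _ hpos'
  w_incr j hj hrise := by
    rcases Fin.val_succAbove_cases i j with hsucc | ⟨-, hj'⟩ | ⟨-, hpos', hcomm⟩
    · simp [P.a_eq_zero_of_val_eq_succ hai hwi hsucc] at hrise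
    · omega
    · simp only [Function.comp_apply, ← hcomm] at hrise ⊢
      exact P.w_incr _ hpos' hrise
  w_first j _ := hpos _
  dv_valley j hj := by
    have hvalley := P.dv_valley _ (mem_filter.mp hj).2
    rcases Fin.val_succAbove_cases i j with hsucc | ⟨hzero, -⟩ | ⟨hj', -, hcomm⟩
    · exact absurd hvalley (P.not_isValley_of_val_eq_succ hai hwi hsucc)
    · exact absurd hvalley.1 (by omega)
    · exact ⟨hj', by simpa only [Function.comp_apply, hcomm] using hvalley.2⟩

variable (hai : P.a i = 0) (hwi : P.w i = P.wmax) (hpos : ∀ j, 0 < P.w j)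

lemma zeros_deleteStep : (P.deleteStep hai hwi hpos).zeros = 0 :=
  (zeros_eq_zero_iff _).2 fun _ => hpos _

lemma card_dv_deleteStep (hi : i ∉ P.dv) : (P.deleteStep hai hwi hpos).dv.card = P.dv.card := by
  conv_rhs => rw [← filter_univ_mem P.dv, Fin.card_filter_univ_succAbove _ i]
  simp [deleteStep, hi]

lemma area_deleteStep : (P.deleteStep hai hwi hpos).area = P.area := by
  simp only [area, deleteStep, Function.comp_apply]
  rw [Fin.sum_univ_succAbove P.a i, hai, zero_add]

lemma touch_eq_touch_deleteStep_add_one (hi : i ∉ P.dv) :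
    P.touch = (P.deleteStep hai hwi hpos).touch + 1 := by
  rw [touch, Fin.card_filter_univ_succAbove _ i]
  simp [deleteStep, touch, hi, hai, hpos i, add_comm]

lemma card_ndinvPairs_eq_card_ndinvPairs_deleteStep_add :
    P.ndinvPairs.card = (P.deleteStep hai hwi hpos).ndinvPairs.card +
      #{j | j < i ∧ j ∉ P.dv ∧ P.a j = 0 ∧ P.w j < P.wmax} := by
  rw [ndinvPairs, Fin.card_filter_univ_prod_succAbove (fun x y => P.Inv x y ∧ x ∉ P.dv) i
    fun y h => P.not_inv_left hai hwi y h.1, Fin.card_filter_univ_succAbove _ i, add_comm]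
  congr 1
  · simp [ndinvPairs, deleteStep, Inv, Fin.succAbove_lt_succAbove_iff]
  · simp only [lt_self_iff_false, false_and, if_false, zero_add, P.inv_right_iff hai hwi]
    congr 1
    ext j
    simp only [mem_filter, mem_univ, true_and]
    tauto

end MaximalDiagonalStep

end DecPath

/-- (Deleting a non-decorated maximal diagonal step.) Let
`P ∈ LD(n+1)^{•k}` (no zero labels), and let `i` be a non-decorated index on the main
diagonal carrying the maximal label `M = max(w)`. Deleting the `i`-th north step
together with the east step following it (indices reindexed along `Fin.succAbove i`)
yields a well-defined element `P' ∈ LD(n)^{•k}` (all decorations are still contractible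
valleys), with `area P' = area P`, `touch P' = touch P - 1` and
`dinv P' = dinv P - #{j < i : j ∉ dv, a j = 0, w j < M}`. -/
theorem delete_undecorated_maximal_diagonal_step
    (n k : ℕ) (P : DecPath (n + 1))
    (hzeros : P.zeros = 0) (hdv : P.dv.card = k)
    (i : Fin (n + 1)) (hi : i ∉ P.dv) (hai : P.a i = 0) (hwi : P.w i = P.wmax) :
    ∃ P' : DecPath n,
      P'.a = P.a ∘ i.succAbove ∧
      P'.w = P.w ∘ i.succAbove ∧
      (∀ j : Fin n, j ∈ P'.dv ↔ i.succAbove j ∈ P.dv) ∧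
      P'.zeros = 0 ∧
      P'.dv.card = k ∧
      P'.area = P.area ∧
      (P'.touch : ℤ) = (P.touch : ℤ) - 1 ∧
      P'.dinv = P.dinv -
        ((Finset.univ.filter fun j : Fin (n + 1) =>
            j < i ∧ j ∉ P.dv ∧ P.a j = 0 ∧ P.w j < P.wmax).card : ℤ) := by
  have hpos := (P.zeros_eq_zero_iff).1 hzeros
  have htouch := P.touch_eq_touch_deleteStep_add_one hai hwi hpos hi
  have hdinv := P.card_ndinvPairs_eq_card_ndinvPairs_deleteStep_add hai hwi hpos
  have hcard := P.card_dv_deleteStep hai hwi hpos hi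
  refine ⟨P.deleteStep hai hwi hpos, rfl, rfl, fun j => by simp [DecPath.deleteStep],
    P.zeros_deleteStep hai hwi hpos, hcard.trans hdv, P.area_deleteStep hai hwi hpos, ?_, ?_⟩
  · rw [htouch]
    push_cast
    ring
  · simp only [DecPath.dinv, hdinv, hcard]
    push_cast
    ring
end

section
/- (Deleting a decorated maximal diagonal valley.) Let P = (π, w, dv) ∈ LD(n)^{•k} with n ≥ 1, M = max(w), and let i be an index with i ∈ dv, a_i(π) = 0 and w_i = M. Let P' = (π', w', dv') be obtained from P by deleting the i-th north step of π together with the east step immediately following it, deleting the i-th entry of w, removing i from dv, and reindexing the remaining decorations accordingly. Then P' is a well-defined element of LD(n−1)^{•(k−1)}; in particular every remaining decorated step is still a contractible valley of (π', w'). Moreover area(P') = area(P), touch(P') = touch(P), and dinv(P') = dinv(P) + 1 − #{j < i : j ∉ dv, a_j(π) = 0, w_j < M}. -/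
open Finset
open scoped Classical

/-!
Let `i` be a decorated valley on the main diagonal carrying the maximal label `M`. The north
step after it cannot climb to diagonal `1`, since its label would have to exceed `M`, and it
cannot be a contractible valley either; so removing step `i` glues the two halves of the path
into a Dyck path whose local conditions are all inherited from `P`. Area and touch are
unchanged because step `i` lies on the main diagonal and is decorated. The lost diagonal
inversions are exactly the pairs `(j, i)`: since `a i = 0` and `w i = M` these are the undecorated
`j < i` on the main diagonal with `w j < M`. Together with the removed decoration this gives the
change of `dinv`.
-/

theorem Finset.card_filter_comp_of_injective {α β : Type*} [Fintype α] [Fintype β]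
    {f : α → β} (hf : Function.Injective f) {r : β → Prop} [DecidablePred r]
    (hr : ∀ b, r b ↔ ∃ a, f a = b) (p : β → Prop) [DecidablePred p] :
    #(univ.filter fun a => p (f a)) = #(univ.filter fun b => r b ∧ p b) := by
  rw [← card_map ⟨f, hf⟩]
  congr 1
  ext b
  simp only [mem_map, mem_filter, mem_univ, true_and, Function.Embedding.coeFn_mk, hr]
  constructor
  · rintro ⟨a, ha, rfl⟩
    exact ⟨⟨a, rfl⟩, ha⟩
  · rintro ⟨⟨a, rfl⟩, ha⟩
    exact ⟨a, ha, rfl⟩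

theorem Fin.card_filter_succAbove {n : ℕ} (i : Fin (n + 1)) (p : Fin (n + 1) → Prop)
    [DecidablePred p] :
    #(univ.filter fun j => p (i.succAbove j)) = #(univ.filter fun J => J ≠ i ∧ p J) :=
  card_filter_comp_of_injective Fin.succAbove_right_injective
    (fun _ => Fin.exists_succAbove_eq_iff.symm) p

theorem Fin.card_filter_succAbove_prod {n : ℕ} (i : Fin (n + 1))
    (p : Fin (n + 1) × Fin (n + 1) → Prop) [DecidablePred p] :
    #(univ.filter fun q : Fin n × Fin n => p (i.succAbove q.1, i.succAbove q.2)) =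
      #(univ.filter fun Q => (Q.1 ≠ i ∧ Q.2 ≠ i) ∧ p Q) :=
  card_filter_comp_of_injective (f := Prod.map i.succAbove i.succAbove)
    (Fin.succAbove_right_injective.prodMap Fin.succAbove_right_injective)
    (fun Q => by simp only [Prod.exists, Prod.map, Prod.ext_iff, exists_and_left,
      exists_and_right, Fin.exists_succAbove_eq_iff]) p

theorem Fin.val_succAbove {n : ℕ} (i : Fin (n + 1)) (j : Fin n) :
    (i.succAbove j : ℕ) = if (j : ℕ) < i then (j : ℕ) else (j : ℕ) + 1 := by
  split_ifs with h
  · exact congrArg Fin.val (Fin.succAbove_of_castSucc_lt i j h)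
  · exact congrArg Fin.val (Fin.succAbove_of_le_castSucc i j (Fin.not_lt.mp h))

theorem Fin.val_le_val_succAbove {n : ℕ} (i : Fin (n + 1)) (j : Fin n) :
    (j : ℕ) ≤ i.succAbove j := by
  rw [Fin.val_succAbove]
  split_ifs <;> omega

theorem fpred_succAbove {n : ℕ} (i : Fin (n + 1)) {j : Fin n} (hj : (j : ℕ) ≠ i) :
    fpred (i.succAbove j) = i.succAbove (fpred j) := by
  ext
  simp only [fpred, Fin.val_succAbove]
  split_ifs <;> omega

theorem fpred_succAbove_of_val_eq {n : ℕ} {i : Fin (n + 1)} {j : Fin n} (hj : (j : ℕ) = i) :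
    fpred (i.succAbove j) = i := by
  ext
  simp only [fpred, Fin.val_succAbove]
  split_ifs <;> omega

theorem isValley_comp_succAbove_iff {n : ℕ} (a w : Fin (n + 1) → ℕ) (i : Fin (n + 1))
    {j : Fin n} (hj : (j : ℕ) ≠ i) :
    IsValley (a ∘ i.succAbove) (w ∘ i.succAbove) j ↔ IsValley a w (i.succAbove j) := by
  have hpos : 0 < (j : ℕ) ↔ 0 < (i.succAbove j : ℕ) := by
    rw [Fin.val_succAbove]
    split_ifs <;> omega
  simp only [IsValley, Function.comp_apply, fpred_succAbove i hj, hpos]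

namespace DecPath

theorem mem_ndinvPairs {N : ℕ} (P : DecPath N) {p : Fin N × Fin N} :
    p ∈ P.ndinvPairs ↔ P.Inv p.1 p.2 ∧ p.1 ∉ P.dv := by
  simp [ndinvPairs]

variable {n : ℕ} (P : DecPath (n + 1)) {i : Fin (n + 1)}

section MaxDiagonal

variable (hai : P.a i = 0) (hmax : ∀ j, P.w j ≤ P.w i)
include hai hmax

theorem a_eq_zero_of_fpred_eq {J : Fin (n + 1)} (hJ : 0 < (J : ℕ)) (hJi : fpred J = i) :
    P.a J = 0 := by
  have hstep := P.a_step J hJ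
  have hincr := P.w_incr J hJ
  rw [hJi, hai] at hstep hincr
  have := hmax J
  omega

theorem not_isValley_of_fpred_eq {J : Fin (n + 1)} (hJi : fpred J = i) :
    ¬ IsValley P.a P.w J := by
  rintro ⟨hJ, h | ⟨-, h⟩⟩
  · rw [hJi, hai] at h
    omega
  · rw [hJi] at h
    exact (hmax J).not_gt h

variable (hi : 0 < (i : ℕ))

def eraseMaxDiagonal : DecPath n where
  a := P.a ∘ i.succAbove
  w := P.w ∘ i.succAbove
  dv := univ.filter fun j => i.succAbove j ∈ P.dv
  a_first j hj := P.a_first _ (by rw [Fin.val_succAbove, if_pos (by omega)]; exact hj)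
  a_step j hj := by
    have hpos := hj.trans_le (Fin.val_le_val_succAbove i j)
    rcases eq_or_ne (j : ℕ) i with h | h
    · simp only [Function.comp_apply,
        P.a_eq_zero_of_fpred_eq hai hmax hpos (fpred_succAbove_of_val_eq h)]
      omega
    · simpa only [Function.comp_apply, fpred_succAbove i h] using P.a_step _ hpos
  w_incr j hj := by
    have hpos := hj.trans_le (Fin.val_le_val_succAbove i j)
    rcases eq_or_ne (j : ℕ) i with h | h
    · simp only [Function.comp_apply,
        P.a_eq_zero_of_fpred_eq hai hmax hpos (fpred_succAbove_of_val_eq h)]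
      omega
    · simpa only [Function.comp_apply, fpred_succAbove i h] using P.w_incr _ hpos
  w_first j hj := P.w_first _ (by rw [Fin.val_succAbove, if_pos (by omega)]; exact hj)
  dv_valley j hj := by
    have hvalley := P.dv_valley _ (mem_filter.mp hj).2
    rcases eq_or_ne (j : ℕ) i with h | h
    · exact absurd hvalley (P.not_isValley_of_fpred_eq hai hmax (fpred_succAbove_of_val_eq h))
    · exact (isValley_comp_succAbove_iff P.a P.w i h).mpr hvalley

theorem mem_dv_eraseMaxDiagonal {j : Fin n} :
    j ∈ (P.eraseMaxDiagonal hai hmax hi).dv ↔ i.succAbove j ∈ P.dv := by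
  simp [eraseMaxDiagonal]

theorem inv_eraseMaxDiagonal_iff {j₁ j₂ : Fin n} :
    (P.eraseMaxDiagonal hai hmax hi).Inv j₁ j₂ ↔
      P.Inv (i.succAbove j₁) (i.succAbove j₂) := by
  simp only [Inv, eraseMaxDiagonal, Function.comp_apply, Fin.succAbove_lt_succAbove_iff]

theorem area_eraseMaxDiagonal : (P.eraseMaxDiagonal hai hmax hi).area = P.area := by
  rw [area, area, Fin.sum_univ_succAbove P.a i, hai, zero_add]
  rfl

theorem zeros_eraseMaxDiagonal_le : (P.eraseMaxDiagonal hai hmax hi).zeros ≤ P.zeros :=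
  (Fin.card_filter_succAbove i fun J => P.w J = 0).trans_le
    (card_le_card (monotone_filter_right _ fun _ _ h => h.2))

theorem card_dv_eraseMaxDiagonal (hdi : i ∈ P.dv) :
    #(P.eraseMaxDiagonal hai hmax hi).dv + 1 = #P.dv := by
  have herase : (univ.filter fun J => J ≠ i ∧ J ∈ P.dv) = P.dv.erase i := by
    ext J
    simp
  rw [← card_erase_add_one hdi, ← herase, ← Fin.card_filter_succAbove]
  rfl

theorem touch_eraseMaxDiagonal (hdi : i ∈ P.dv) :
    (P.eraseMaxDiagonal hai hmax hi).touch = P.touch := by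
  simp only [touch, mem_dv_eraseMaxDiagonal]
  refine (Fin.card_filter_succAbove i fun J => J ∉ P.dv ∧ P.a J = 0 ∧ 0 < P.w J).trans ?_
  congr 1
  ext J
  simp only [mem_filter, mem_univ, true_and]
  exact ⟨And.right, fun h => ⟨fun hJ => h.1 (hJ ▸ hdi), h⟩⟩

theorem card_ndinvPairs_eraseMaxDiagonal (hdi : i ∈ P.dv) :
    #(P.eraseMaxDiagonal hai hmax hi).ndinvPairs =
      #(P.ndinvPairs.filter fun p => p.2 ≠ i) := by
  simp only [ndinvPairs, inv_eraseMaxDiagonal_iff, mem_dv_eraseMaxDiagonal, filter_filter]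
  refine (Fin.card_filter_succAbove_prod i fun Q => P.Inv Q.1 Q.2 ∧ Q.1 ∉ P.dv).trans ?_
  congr 1
  ext p
  simp only [mem_filter, mem_univ, true_and]
  exact ⟨fun h => ⟨h.2, h.1.2⟩, fun h => ⟨⟨fun hp => h.1.2 (hp ▸ hdi), h.2⟩, h.1⟩⟩

theorem card_ndinvPairs_filter_snd_eq :
    #(P.ndinvPairs.filter fun p => p.2 = i) =
      #(univ.filter fun j => j < i ∧ j ∉ P.dv ∧ P.a j = 0 ∧ P.w j < P.w i) := by
  symm
  rw [← card_map (Function.Embedding.sectL _ i)]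
  congr 1
  ext ⟨j, J⟩
  simp only [mem_ndinvPairs, Inv, mem_filter, mem_univ, true_and, mem_map,
    Function.Embedding.sectL_apply, Prod.mk.injEq]
  constructor
  · rintro ⟨j, ⟨hlt, hj, ha, hw⟩, rfl, rfl⟩
    exact ⟨⟨⟨hlt, Or.inl ⟨ha.trans hai.symm, hw⟩⟩, hj⟩, rfl⟩
  · rintro ⟨⟨⟨hlt, ⟨ha, hw⟩ | ⟨-, hw⟩⟩, hj⟩, rfl⟩
    · exact ⟨j, ⟨hlt, hj, ha.trans hai, hw⟩, rfl, rfl⟩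
    · exact absurd hw (hmax j).not_gt

theorem dinv_eraseMaxDiagonal (hdi : i ∈ P.dv) :
    (P.eraseMaxDiagonal hai hmax hi).dinv = P.dinv + 1 -
      #(univ.filter fun j => j < i ∧ j ∉ P.dv ∧ P.a j = 0 ∧ P.w j < P.w i) := by
  have hsplit : #(P.ndinvPairs.filter fun p => p.2 = i) +
      #(P.ndinvPairs.filter fun p => p.2 ≠ i) = #P.ndinvPairs :=
    card_filter_add_card_filter_not _
  have hdv := P.card_dv_eraseMaxDiagonal hai hmax hi hdi
  rw [dinv, dinv, P.card_ndinvPairs_eraseMaxDiagonal hai hmax hi hdi,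
    ← P.card_ndinvPairs_filter_snd_eq hai hmax]
  omega

end MaxDiagonal
end DecPath

/-- (Deleting a decorated maximal diagonal valley.) Let
`P ∈ LD(n+1)^{•k}` (no zero labels), and let `i ∈ dv` be a decorated valley on the main
diagonal carrying the maximal label `M = max(w)`. Deleting the `i`-th north step
together with the east step following it, removing `i` from `dv` and reindexing along
`Fin.succAbove i`, yields a well-defined element `P' ∈ LD(n)^{•(k-1)}` (all remaining
decorations are still contractible valleys), with `area P' = area P`,
`touch P' = touch P` and `dinv P' = dinv P + 1 - #{j < i : j ∉ dv, a j = 0, w j < M}`. -/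
theorem delete_decorated_maximal_diagonal_valley
    (n k : ℕ) (P : DecPath (n + 1))
    (hzeros : P.zeros = 0) (hdv : P.dv.card = k)
    (i : Fin (n + 1)) (hi : i ∈ P.dv) (hai : P.a i = 0) (hwi : P.w i = P.wmax) :
    ∃ P' : DecPath n,
      P'.a = P.a ∘ i.succAbove ∧
      P'.w = P.w ∘ i.succAbove ∧
      (∀ j : Fin n, j ∈ P'.dv ↔ i.succAbove j ∈ P.dv) ∧
      P'.zeros = 0 ∧
      (P'.dv.card : ℤ) = (k : ℤ) - 1 ∧
      P'.area = P.area ∧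
      P'.touch = P.touch ∧
      P'.dinv = P.dinv + 1 -
        ((Finset.univ.filter fun j : Fin (n + 1) =>
            j < i ∧ j ∉ P.dv ∧ P.a j = 0 ∧ P.w j < P.wmax).card : ℤ) := by
  have hi0 : 0 < (i : ℕ) := (P.dv_valley i hi).1
  have hmax : ∀ j, P.w j ≤ P.w i := fun j => hwi ▸ le_sup (mem_univ j)
  have hdv' := P.card_dv_eraseMaxDiagonal hai hmax hi0 hi
  refine ⟨P.eraseMaxDiagonal hai hmax hi0, rfl, rfl,
    fun _ => P.mem_dv_eraseMaxDiagonal hai hmax hi0, ?_, by omega,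
    P.area_eraseMaxDiagonal hai hmax hi0, P.touch_eraseMaxDiagonal hai hmax hi0 hi, ?_⟩
  · exact Nat.le_zero.mp (hzeros ▸ P.zeros_eraseMaxDiagonal_le hai hmax hi0)
  · rw [P.dinv_eraseMaxDiagonal hai hmax hi0 hi, hwi]
end

section
/- For every P = (π, w, dv) ∈ LD(m,n)^{•k}: for each j ∈ dv there exists an index i < j such that (i,j) is a diagonal inversion of P; consequently dinv(P) ≥ 0. -/
open Finset
open scoped Classical

/-!
Let `m` be a contractible valley and let `j = m` or `(m, j)` be a diagonal inversion. Then
some `(i, j)` with `i < m` is a diagonal inversion: either `(m - 1, j)` is a primary one, or the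
area word exceeds `a j` just before `m`; in the latter case the first position `i < m` where it
exceeds `a j` is an ascent from `a j` to `a j + 1`, whose labels increase strictly, so either
`(i - 1, j)` is primary or `(i, j)` is secondary. Applied to the least inversion partner `i` of
a decorated valley `j`, this shows that `i` is undecorated, so every decorated valley is the
second coordinate of an inversion counted by `dinv`.
-/

lemma fpred_lt {N : ℕ} {j : Fin N} (hj : 0 < (j : ℕ)) : fpred j < j :=
  Fin.lt_def.mpr (Nat.sub_lt hj one_pos)

namespace DecPath

variable {N : ℕ} (P : DecPath N)

lemma exists_ascent_lt {m : Fin N} {v : ℕ} (hv : v < P.a (fpred m)) :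
    ∃ i : Fin N, 0 < (i : ℕ) ∧ i < m ∧ P.a (fpred i) = v ∧ P.a i = v + 1 := by
  obtain ⟨i, ⟨him, hvi⟩, hmin⟩ :=
    wellFounded_lt.has_min {i : Fin N | i ≤ fpred m ∧ v < P.a i} ⟨fpred m, le_rfl, hv⟩
  have hi0 : 0 < (i : ℕ) := by
    by_contra h
    rw [P.a_first i (by omega)] at hvi
    omega
  have hpred : P.a (fpred i) ≤ v := by
    by_contra h
    exact hmin (fpred i) ⟨(fpred_lt hi0).le.trans him, by omega⟩ (fpred_lt hi0)
  have hstep := P.a_step i hi0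
  have him' : i < m := by
    rw [Fin.le_def] at him
    exact Fin.lt_def.mpr (by simp only [fpred] at him; omega)
  exact ⟨i, hi0, him', by omega, by omega⟩

lemma exists_inv_lt_of_lt_a_fpred {m j : Fin N} (hmj : m ≤ j)
    (h : P.a j < P.a (fpred m)) : ∃ i < m, P.Inv i j := by
  obtain ⟨i, hi0, him, hpred, hi⟩ := P.exists_ascent_lt h
  have hij : i < j := him.trans_le hmj
  by_cases hw : P.w (fpred i) < P.w j
  · exact ⟨fpred i, (fpred_lt hi0).trans him, (fpred_lt hi0).trans hij, Or.inl ⟨hpred, hw⟩⟩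
  · have hincr := P.w_incr i hi0 (by omega)
    exact ⟨i, him, hij, Or.inr ⟨hi, by omega⟩⟩

lemma exists_inv_lt_of_isValley {m j : Fin N} (hm : IsValley P.a P.w m)
    (hmj : m = j ∨ P.Inv m j) : ∃ i < m, P.Inv i j := by
  have hmj' : m ≤ j ∧ (P.a j < P.a m ∨ (P.a m = P.a j ∧ P.w m ≤ P.w j)) := by
    rcases hmj with rfl | ⟨hlt, ⟨ha, hw⟩ | ⟨ha, -⟩⟩
    · exact ⟨le_rfl, Or.inr ⟨rfl, le_rfl⟩⟩
    · exact ⟨hlt.le, Or.inr ⟨ha, hw.le⟩⟩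
    · exact ⟨hlt.le, Or.inl (by omega)⟩
  obtain ⟨hle, hbelow | ⟨ha, hw⟩⟩ := hmj'
  · obtain ⟨hm0, hdesc | ⟨hflat, -⟩⟩ := hm <;>
      exact P.exists_inv_lt_of_lt_a_fpred hle (by omega)
  · obtain ⟨hm0, hdesc | ⟨hflat, hwp⟩⟩ := hm
    · exact P.exists_inv_lt_of_lt_a_fpred hle (by omega)
    · exact ⟨fpred m, fpred_lt hm0, (fpred_lt hm0).trans_le hle,
        Or.inl ⟨by omega, by omega⟩⟩

lemma exists_inv_of_mem_dv {j : Fin N} (hj : j ∈ P.dv) : ∃ i, P.Inv i j :=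
  (P.exists_inv_lt_of_isValley (P.dv_valley j hj) (Or.inl rfl)).imp fun _ => And.right

lemma exists_inv_not_mem_dv {j : Fin N} (hj : j ∈ P.dv) : ∃ i, P.Inv i j ∧ i ∉ P.dv := by
  obtain ⟨i, hi, hmin⟩ := wellFounded_lt.has_min {i | P.Inv i j} (P.exists_inv_of_mem_dv hj)
  refine ⟨i, hi, fun hidv => ?_⟩
  obtain ⟨i', hi'i, hi'⟩ := P.exists_inv_lt_of_isValley (P.dv_valley i hidv) (Or.inr hi)
  exact hmin i' hi' hi'i

lemma dv_subset_image_snd_ndinvPairs : P.dv ⊆ P.ndinvPairs.image Prod.snd := by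
  intro j hj
  obtain ⟨i, hi, hidv⟩ := P.exists_inv_not_mem_dv hj
  exact Finset.mem_image.mpr ⟨(i, j), by simp [ndinvPairs, hi, hidv], rfl⟩

end DecPath

/-- For every decorated partially labelled Dyck path `P`, every decorated
valley `j ∈ dv` is the second coordinate of some diagonal inversion, and consequently
`dinv P ≥ 0`. -/
theorem dinv_nonneg (N : ℕ) (P : DecPath N) :
    (∀ j ∈ P.dv, ∃ i : Fin N, P.Inv i j) ∧ 0 ≤ P.dinv := by
  refine ⟨fun j hj => P.exists_inv_of_mem_dv hj, ?_⟩
  have hcard : P.dv.card ≤ P.ndinvPairs.card :=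
    (Finset.card_le_card P.dv_subset_image_snd_ndinvPairs).trans Finset.card_image_le
  rw [DecPath.dinv, sub_nonneg]
  exact_mod_cast hcard
end

section
/- (Interlacing of decorated maximal diagonal valleys.) Let P = (π, w, dv) ∈ LD(n)^{•k} with n ≥ 1 and M = max(w). Call an index i of type (b) if i ∈ dv, a_i(π) = 0 and w_i = M, and of type (c) if i ∉ dv, a_i(π) = 0 and 0 < w_i < M. If b_1 < b_2 < … < b_s are the type (b) indices, then for each 1 ≤ t ≤ s there are at least t type (c) indices j with j < b_t. In particular there is a type (c) index before the first type (b) index, and strictly between any two consecutive type (b) indices there is a type (c) index. -/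
open Finset
open scoped Classical

/-! A diagonal step followed, as the next diagonal step, by a decorated valley never carries
the maximal label: the step right after it is either a rise or that valley itself, and the label
increases in both cases. Walking back from a decorated diagonal valley one therefore meets an
undecorated diagonal step with non-maximal label before reaching either the first step (which is
never a valley) or a diagonal step with maximal label. So these steps interlace with the decorated
maximal diagonal valleys, which bounds the number of the latter. -/

theorem Finset.card_le_card_of_interlacing {α : Type*} [LinearOrder α] {B C : Finset α}
    (hfirst : ∀ x ∈ B, ∃ c ∈ C, c < x)
    (hbetween : ∀ x ∈ B, ∀ y ∈ B, x < y → ∃ c ∈ C, x < c ∧ c < y) :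
    #B ≤ #C := by
  have hlast : ∀ x ∈ B, ∃ c ∈ C, c < x ∧ ∀ c' ∈ C, c' < x → c' ≤ c := by
    intro x hx
    obtain ⟨c, hc, hcx⟩ := hfirst x hx
    obtain ⟨m, hm, hmax⟩ :=
      (C.filter (· < x)).exists_max_image id ⟨c, mem_filter.2 ⟨hc, hcx⟩⟩
    rw [mem_filter] at hm
    exact ⟨m, hm.1, hm.2, fun c' hc' hc'x => hmax c' (mem_filter.2 ⟨hc', hc'x⟩)⟩
  -- `x ↦ f x`, the last element of `C` below `x`, is injective on `B`
  choose! f hfC hflt hfmax using hlast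
  refine card_le_card_of_injOn f hfC fun x hx y hy hxy => ?_
  by_contra hne
  wlog hlt : x < y generalizing x y
  · exact this y hy x hx hxy.symm (Ne.symm hne) (lt_of_le_of_ne (not_lt.1 hlt) (Ne.symm hne))
  obtain ⟨c, hc, hxc, hcy⟩ := hbetween x hx y hy hlt
  have hcfy : c ≤ f y := hfmax y hy c hc hcy
  exact (hcfy.trans_lt (hxy ▸ hflt x hx)).not_gt hxc

namespace DecPath

variable {N : ℕ} (P : DecPath N)

theorem w_le_wmax_s6 (i : Fin N) : P.w i ≤ P.wmax :=
  le_sup (mem_univ i)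

theorem notMem_dv_of_val_eq_zero {i : Fin N} (hi : (i : ℕ) = 0) : i ∉ P.dv :=
  fun h => (P.dv_valley i h).1.ne' hi

theorem w_lt_wmax_of_next_diag_mem_dv {p d : Fin N} (hpd : p < d) (hp : P.a p = 0)
    (hd : d ∈ P.dv) (had : P.a d = 0) (hgap : ∀ i, p < i → i < d → P.a i ≠ 0) :
    P.w p < P.wmax := by
  set s : Fin N := ⟨p + 1, lt_of_le_of_lt hpd d.isLt⟩
  have hps : fpred s = p := Fin.ext (by simp [fpred, s])
  have hs : 0 < (s : ℕ) := Nat.succ_pos _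
  have hsd : s ≤ d := Fin.le_def.2 hpd
  by_cases hsa : P.a s = 0
  · have hsd : s = d := hsd.eq_of_not_lt fun h => hgap s (Nat.lt_succ_self _) h hsa
    rw [← hsd] at hd had
    obtain ⟨-, hvalley⟩ := P.dv_valley s hd
    rw [hps, hp, had] at hvalley
    simp only [lt_irrefl, true_and, false_or] at hvalley
    exact hvalley.trans_le (P.w_le_wmax_s6 s)
  · have hrise : P.a (fpred s) < P.a s := by
      have := P.a_step s hs
      rw [hps, hp] at this ⊢
      omega
    exact (hps ▸ P.w_incr s hs hrise).trans_le (P.w_le_wmax_s6 s)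

theorem exists_prev_diag {c j : Fin N} (hcj : c < j) (hc : P.a c = 0) :
    ∃ p, c ≤ p ∧ p < j ∧ P.a p = 0 ∧ ∀ i, p < i → i < j → P.a i ≠ 0 := by
  obtain ⟨p, hp, hmax⟩ := (univ.filter fun i => i < j ∧ P.a i = 0).exists_max_image id
    ⟨c, by simp [hcj, hc]⟩
  simp only [mem_filter, mem_univ, true_and] at hp
  refine ⟨p, hmax c (by simp [hcj, hc]), hp.1, hp.2, fun i hpi hij hai => ?_⟩
  exact (hmax i (by simp [hij, hai])).not_gt hpi

theorem w_lt_wmax_or_exists_undecorated {j : Fin N} (hj : j ∈ P.dv) (haj : P.a j = 0)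
    {c : Fin N} (hcj : c < j) (hc : P.a c = 0) :
    P.w c < P.wmax ∨ ∃ i, c < i ∧ i < j ∧ P.a i = 0 ∧ i ∉ P.dv ∧ P.w i < P.wmax := by
  induction j using WellFoundedLT.induction with
  | ind j ih =>
    obtain ⟨p, hcp, hpj, hp, hgap⟩ := P.exists_prev_diag hcj hc
    have hwp := P.w_lt_wmax_of_next_diag_mem_dv hpj hp hj haj hgap
    obtain rfl | hcp := hcp.eq_or_lt
    · exact Or.inl hwp
    by_cases hpdv : p ∈ P.dv
    · obtain hwc | ⟨i, hci, hip, hrest⟩ := ih p hpj hpdv hp hcp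
      · exact Or.inl hwc
      · exact Or.inr ⟨i, hci, hip.trans hpj, hrest⟩
    · exact Or.inr ⟨p, hcp, hpj, hp, hpdv, hwp⟩

theorem exists_undecorated_lt_of_mem_dv {j : Fin N} (hj : j ∈ P.dv) (haj : P.a j = 0) :
    ∃ i < j, P.a i = 0 ∧ i ∉ P.dv ∧ P.w i < P.wmax := by
  have hj0 : 0 < (j : ℕ) := (P.dv_valley j hj).1
  set z : Fin N := ⟨0, hj0.trans j.isLt⟩
  have hz : z ∉ P.dv := P.notMem_dv_of_val_eq_zero rfl
  obtain hwz | ⟨i, -, hij, hrest⟩ :=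
    P.w_lt_wmax_or_exists_undecorated hj haj (c := z) hj0 (P.a_first z rfl)
  · exact ⟨z, hj0, P.a_first z rfl, hz, hwz⟩
  · exact ⟨i, hij, hrest⟩

theorem exists_undecorated_between {x y : Fin N} (hxy : x < y) (hax : P.a x = 0)
    (hwx : P.w x = P.wmax) (hy : y ∈ P.dv) (hay : P.a y = 0) :
    ∃ i, x < i ∧ i < y ∧ P.a i = 0 ∧ i ∉ P.dv ∧ P.w i < P.wmax :=
  (P.w_lt_wmax_or_exists_undecorated hy hay hxy hax).resolve_left hwx.not_lt

theorem w_pos_of_zeros_eq_zero (h : P.zeros = 0) (i : Fin N) : 0 < P.w i := by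
  have := filter_eq_empty_iff.1 (card_eq_zero.1 h) (mem_univ i)
  omega

end DecPath

theorem interlacing_decorated_maximal_diagonal_valleys_general
    (n : ℕ) (P : DecPath n)
    (hzeros : P.zeros = 0)
    (b : Fin n) :
    (Finset.univ.filter fun j : Fin n =>
        (j ∈ P.dv ∧ P.a j = 0 ∧ P.w j = P.wmax) ∧ j ≤ b).card ≤
    (Finset.univ.filter fun j : Fin n =>
        (j ∉ P.dv ∧ P.a j = 0 ∧ 0 < P.w j ∧ P.w j < P.wmax) ∧ j < b).card := by
  apply card_le_card_of_interlacing
  · simp only [mem_filter, mem_univ, true_and]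
    rintro x ⟨⟨hx, hax, -⟩, hxb⟩
    obtain ⟨i, hix, hai, hi, hwi⟩ := P.exists_undecorated_lt_of_mem_dv hx hax
    exact ⟨i, ⟨⟨hi, hai, P.w_pos_of_zeros_eq_zero hzeros i, hwi⟩, hix.trans_le hxb⟩, hix⟩
  · simp only [mem_filter, mem_univ, true_and]
    rintro x ⟨⟨-, hax, hwx⟩, -⟩ y ⟨⟨hy, hay, -⟩, hyb⟩ hxy
    obtain ⟨i, hxi, hiy, hai, hi, hwi⟩ := P.exists_undecorated_between hxy hax hwx hy hay
    exact ⟨i, ⟨⟨hi, hai, P.w_pos_of_zeros_eq_zero hzeros i, hwi⟩, hiy.trans_le hyb⟩, hxi, hiy⟩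

/-- (Interlacing of decorated maximal diagonal valleys.) Let
`P ∈ LD(n)^{•k}` (no zero labels) with `n ≥ 1` and `M = max(w)`. Call an index of type
(b) if it is a decorated diagonal step with maximal label, and of type (c) if it is a
non-decorated diagonal step with a positive non-maximal label. Then for every type (b)
index `b`, the number of type (b) indices `≤ b` is at most the number of type (c)
indices `< b`; i.e. before the `t`-th type (b) index there are at least `t` type (c)
indices. -/
theorem interlacing_decorated_maximal_diagonal_valleys
    (n k : ℕ) (hn : 1 ≤ n) (P : DecPath n)
    (hzeros : P.zeros = 0) (hdv : P.dv.card = k)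
    (b : Fin n) (hb : b ∈ P.dv ∧ P.a b = 0 ∧ P.w b = P.wmax) :
    (Finset.univ.filter fun j : Fin n =>
        (j ∈ P.dv ∧ P.a j = 0 ∧ P.w j = P.wmax) ∧ j ≤ b).card ≤
    (Finset.univ.filter fun j : Fin n =>
        (j ∉ P.dv ∧ P.a j = 0 ∧ 0 < P.w j ∧ P.w j < P.wmax) ∧ j < b).card :=
  interlacing_decorated_maximal_diagonal_valleys_general n P hzeros b
end
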